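/- Let k be a field with the discrete topology and let U, V be topological k-vector spaces with linear topology. Consider the k-linear difference map d : (U ⊗_k V) × (U ⊗_k V) → U ⊗_k V, d(e₁, e₂) = e₁ − e₂, and the diagonal map δ : U ⊗_k V → (U ⊗_k V) × (U ⊗_k V), δ(w) = (w, w). Then: (a) d is continuous, surjective, and open as a map from (U ⊗^λ V) × (U ⊗^→ V) (with the product topology) to U ⊗^! V; (b) δ is a topological embedding of U ⊗^* V into (U ⊗^λ V) × (U ⊗^→ V), i.e., the *-topology on U ⊗_k V coincides with the topology induced on the diagonal from the product topology; moreover, the image of δ is exactly the kernel of d. -/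

import Mathlib

open Filter Topology TensorProduct

/-- A topological `k`-vector space has *linear topology* if the open `k`-subspaces form a basis
of neighborhoods of zero. -/
def HasLinearTopologyMod (k V : Type*) [Semiring k] [AddCommMonoid V] [Module k V]
    [TopologicalSpace V] : Prop :=
  ∀ s ∈ nhds (0 : V), ∃ U : Submodule k V, IsOpen (U : Set V) ∧ (U : Set V) ⊆ s

section TensorTopologies

variable {k U V : Type*} [CommRing k] [AddCommGroup U] [Module k U]
  [AddCommGroup V] [Module k V] [TopologicalSpace U] [TopologicalSpace V]

/-- `S·T`: the image of `S ⊗ T` in `U ⊗[k] V`, i.e. the span of the elementary tensors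
`s ⊗ₜ t` with `s ∈ S`, `t ∈ T`. -/
def tensorImage (S : Submodule k U) (T : Submodule k V) : Submodule k (U ⊗[k] V) :=
  Submodule.span k {w | ∃ s ∈ S, ∃ t ∈ T, w = s ⊗ₜ[k] t}

/-- The condition for a subspace `E ⊆ U ⊗ V` to be a basic neighborhood of `0` in the
`*`-topology. -/
def StarCond (E : Submodule k (U ⊗[k] V)) : Prop :=
  (∃ (P : Submodule k U) (Q : Submodule k V), IsOpen (P : Set U) ∧ IsOpen (Q : Set V) ∧
      tensorImage P Q ≤ E) ∧
  (∀ u : U, ∃ Q : Submodule k V, IsOpen (Q : Set V) ∧ ∀ q ∈ Q, u ⊗ₜ[k] q ∈ E) ∧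
  (∀ v : V, ∃ P : Submodule k U, IsOpen (P : Set U) ∧ ∀ p ∈ P, p ⊗ₜ[k] v ∈ E)

/-- The condition for a subspace `E ⊆ U ⊗ V` to be a basic neighborhood of `0` in the
`λ`-topology. -/
def LambdaCond (E : Submodule k (U ⊗[k] V)) : Prop :=
  (∃ P : Submodule k U, IsOpen (P : Set U) ∧ tensorImage P (⊤ : Submodule k V) ≤ E) ∧
  (∀ u : U, ∃ Q : Submodule k V, IsOpen (Q : Set V) ∧ ∀ q ∈ Q, u ⊗ₜ[k] q ∈ E)

/-- `τ` is the `*`-topology on `U ⊗[k] V`: a group topology in which the subspaces satisfying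
`StarCond` form a basis of neighborhoods of `0`. -/
def IsStarTopology (τ : TopologicalSpace (U ⊗[k] V)) : Prop :=
  @IsTopologicalAddGroup (U ⊗[k] V) τ _ ∧
  (@nhds _ τ 0).HasBasis (fun E : Submodule k (U ⊗[k] V) => StarCond E)
    (fun E => (E : Set (U ⊗[k] V)))

/-- `τ` is the `λ`-topology on `U ⊗[k] V`. -/
def IsLambdaTopology (τ : TopologicalSpace (U ⊗[k] V)) : Prop :=
  @IsTopologicalAddGroup (U ⊗[k] V) τ _ ∧
  (@nhds _ τ 0).HasBasis (fun E : Submodule k (U ⊗[k] V) => LambdaCond E)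
    (fun E => (E : Set (U ⊗[k] V)))

/-- `τ` is the `!`-topology on `U ⊗[k] V`: a group topology in which the subspaces
`P·V + U·Q`, with `P ⊆ U` and `Q ⊆ V` open subspaces, form a basis of neighborhoods of `0`. -/
def IsShriekTopology (τ : TopologicalSpace (U ⊗[k] V)) : Prop :=
  @IsTopologicalAddGroup (U ⊗[k] V) τ _ ∧
  (@nhds _ τ 0).HasBasis
    (fun PQ : Submodule k U × Submodule k V =>
      IsOpen (PQ.1 : Set U) ∧ IsOpen (PQ.2 : Set V))
    (fun PQ => ((tensorImage PQ.1 (⊤ : Submodule k V) ⊔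
      tensorImage (⊤ : Submodule k U) PQ.2 : Submodule k (U ⊗[k] V)) : Set (U ⊗[k] V)))

/-- The condition for a subspace `E ⊆ U ⊗ V` to be a basic neighborhood of `0` in the
`→`-topology (the opposite of the `λ`-topology). -/
def ArrowCond (E : Submodule k (U ⊗[k] V)) : Prop :=
  (∃ Q : Submodule k V, IsOpen (Q : Set V) ∧ tensorImage (⊤ : Submodule k U) Q ≤ E) ∧
  (∀ v : V, ∃ P : Submodule k U, IsOpen (P : Set U) ∧ ∀ p ∈ P, p ⊗ₜ[k] v ∈ E)

/-- `τ` is the `→`-topology on `U ⊗[k] V`. -/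
def IsArrowTopology (τ : TopologicalSpace (U ⊗[k] V)) : Prop :=
  @IsTopologicalAddGroup (U ⊗[k] V) τ _ ∧
  (@nhds _ τ 0).HasBasis (fun E : Submodule k (U ⊗[k] V) => ArrowCond E)
    (fun E => (E : Set (U ⊗[k] V)))

end TensorTopologies

/-! All four topologies are group topologies and `d`, `δ` are additive, so everything reduces
to neighbourhoods of `0`. Each `!`-basic subspace `W = P·V + U·Q` is a neighbourhood of `0` for
both the `λ`- and the `→`-topology, so `W × W` is mapped into `W` by `d`; conversely, if `E₁ ⊇ P·V`
and `E₂ ⊇ U·Q` then `E₁ - E₂ ⊇ W`. For the diagonal, `E₁ ∩ E₂` is a `*`-neighbourhood whenever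
`E₁` is a `λ`- and `E₂` a `→`-neighbourhood. Conversely, a `*`-neighbourhood `E ⊇ P·Q` contains
`(P·V + E ∩ U·Q) ∩ (U·Q + E ∩ P·V)`: by the modular law this intersection is
`P·V ∩ U·Q + E ∩ U·Q + E ∩ P·V`, and over a field `P·V ∩ U·Q = P·Q`. -/

theorem sup_inf_sup_le_of_inf_le {α : Type*} [Lattice α] [IsModularLattice α] {a b e : α}
    (h : a ⊓ b ≤ e) : (a ⊔ e ⊓ b) ⊓ (b ⊔ e ⊓ a) ≤ e := by
  calc (a ⊔ e ⊓ b) ⊓ (b ⊔ e ⊓ a) = (e ⊓ a ⊔ b) ⊓ (a ⊔ e ⊓ b) := by rw [inf_comm, sup_comm]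
    _ = e ⊓ a ⊔ (e ⊓ b ⊔ a) ⊓ b := by
      rw [sup_inf_assoc_of_le _ (inf_le_right.trans le_sup_left), sup_comm a (e ⊓ b), inf_comm b]
    _ = e ⊓ a ⊔ (e ⊓ b ⊔ a ⊓ b) := by rw [sup_inf_assoc_of_le _ inf_le_right]
    _ ≤ e := sup_le inf_le_left (sup_le inf_le_left h)

section LinearAlgebra

variable {k U V : Type*}

section CommRing

variable [CommRing k] [AddCommGroup U] [Module k U] [AddCommGroup V] [Module k V]

theorem tmul_mem_tensorImage {S : Submodule k U} {T : Submodule k V} {s : U} {t : V}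
    (hs : s ∈ S) (ht : t ∈ T) : s ⊗ₜ[k] t ∈ tensorImage S T :=
  Submodule.subset_span ⟨s, hs, t, ht, rfl⟩

theorem tensorImage_le_iff {S : Submodule k U} {T : Submodule k V}
    {E : Submodule k (U ⊗[k] V)} : tensorImage S T ≤ E ↔ ∀ s ∈ S, ∀ t ∈ T, s ⊗ₜ[k] t ∈ E := by
  refine ⟨fun h s hs t ht => h (tmul_mem_tensorImage hs ht), fun h => ?_⟩
  rw [tensorImage, Submodule.span_le]
  rintro _ ⟨s, hs, t, ht, rfl⟩
  exact h s hs t ht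

theorem tensorImage_mono {S S' : Submodule k U} {T T' : Submodule k V}
    (hS : S ≤ S') (hT : T ≤ T') : tensorImage S T ≤ tensorImage S' T' :=
  tensorImage_le_iff.2 fun _s hs _t ht => tmul_mem_tensorImage (hS hs) (hT ht)

end CommRing

variable [Field k] [AddCommGroup U] [Module k U] [AddCommGroup V] [Module k V]

theorem tensorImage_top_inf_tensorImage_top (P : Submodule k U) (Q : Submodule k V) :
    tensorImage P ⊤ ⊓ tensorImage ⊤ Q = tensorImage P Q := by
  refine le_antisymm ?_ (le_inf (tensorImage_mono le_rfl le_top) (tensorImage_mono le_top le_rfl))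
  obtain ⟨Q', hQ'⟩ := Q.exists_isCompl
  -- `id ⊗ π`, for a projection `π` of `V` onto `Q`, fixes `U·Q` and maps `P·V` into `P·Q`.
  let π := Q.projection Q' hQ'
  have hfix : tensorImage ⊤ Q ≤ LinearMap.eqLocus (π.lTensor U) LinearMap.id :=
    tensorImage_le_iff.2 fun u _ q hq => by
      simp [π, Submodule.projection_apply_of_mem_left hQ' hq]
  have hmaps : tensorImage P ⊤ ≤ (tensorImage P Q).comap (π.lTensor U) :=
    tensorImage_le_iff.2 fun p hp v _ => tmul_mem_tensorImage hp (by simp [π])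
  rintro x ⟨hxP, hxQ⟩
  have hx : π.lTensor U x = x := hfix hxQ
  exact hx ▸ hmaps hxP

end LinearAlgebra

section Conditions

variable {k U V : Type*} [AddCommGroup U] [AddCommGroup V] [TopologicalSpace U]
  [TopologicalSpace V]

section CommRing

variable [CommRing k] [Module k U] [Module k V] {P : Submodule k U} {Q : Submodule k V}

theorem lambdaCond_tensorImage_sup (hP : IsOpen (P : Set U)) (hQ : IsOpen (Q : Set V)) :
    LambdaCond (tensorImage P ⊤ ⊔ tensorImage ⊤ Q) :=
  ⟨⟨P, hP, le_sup_left⟩, fun _ =>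
    ⟨Q, hQ, fun _ hq => Submodule.mem_sup_right (tmul_mem_tensorImage trivial hq)⟩⟩

theorem arrowCond_tensorImage_sup (hP : IsOpen (P : Set U)) (hQ : IsOpen (Q : Set V)) :
    ArrowCond (tensorImage P ⊤ ⊔ tensorImage ⊤ Q) :=
  ⟨⟨Q, hQ, le_sup_right⟩, fun _ =>
    ⟨P, hP, fun _ hp => Submodule.mem_sup_left (tmul_mem_tensorImage hp trivial)⟩⟩

theorem LambdaCond.inf_arrowCond {E₁ E₂ : Submodule k (U ⊗[k] V)} (h₁ : LambdaCond E₁)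
    (h₂ : ArrowCond E₂) : StarCond (E₁ ⊓ E₂) := by
  obtain ⟨⟨P, hP, hPE⟩, hu⟩ := h₁
  obtain ⟨⟨Q, hQ, hQE⟩, hv⟩ := h₂
  refine ⟨⟨P, Q, hP, hQ, le_inf ((tensorImage_mono le_rfl le_top).trans hPE)
    ((tensorImage_mono le_top le_rfl).trans hQE)⟩, fun u => ?_, fun v => ?_⟩
  · obtain ⟨Qu, hQu, huE⟩ := hu u
    exact ⟨Qu ⊓ Q, by simpa using hQu.inter hQ,
      fun q hq => ⟨huE q hq.1, hQE (tmul_mem_tensorImage trivial hq.2)⟩⟩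
  · obtain ⟨Pv, hPv, hvE⟩ := hv v
    exact ⟨Pv ⊓ P, by simpa using hPv.inter hP,
      fun p hp => ⟨hPE (tmul_mem_tensorImage hp.2 trivial), hvE p hp.1⟩⟩

end CommRing

variable [Field k] [Module k U] [Module k V]

theorem StarCond.exists_lambdaCond_arrowCond {E : Submodule k (U ⊗[k] V)} (hE : StarCond E) :
    ∃ E₁ E₂, LambdaCond E₁ ∧ ArrowCond E₂ ∧ E₁ ⊓ E₂ ≤ E := by
  obtain ⟨⟨P, Q, hP, hQ, hPQ⟩, hu, hv⟩ := hE
  refine ⟨tensorImage P ⊤ ⊔ E ⊓ tensorImage ⊤ Q, tensorImage ⊤ Q ⊔ E ⊓ tensorImage P ⊤,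
    ⟨⟨P, hP, le_sup_left⟩, fun u => ?_⟩, ⟨⟨Q, hQ, le_sup_left⟩, fun v => ?_⟩,
    sup_inf_sup_le_of_inf_le ((tensorImage_top_inf_tensorImage_top P Q).trans_le hPQ)⟩
  · obtain ⟨Qu, hQu, huE⟩ := hu u
    exact ⟨Qu ⊓ Q, by simpa using hQu.inter hQ, fun q hq =>
      Submodule.mem_sup_right ⟨huE q hq.1, tmul_mem_tensorImage trivial hq.2⟩⟩
  · obtain ⟨Pv, hPv, hvE⟩ := hv v
    exact ⟨Pv ⊓ P, by simpa using hPv.inter hP, fun p hp =>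
      Submodule.mem_sup_right ⟨hvE p hp.1, tmul_mem_tensorImage hp.2 trivial⟩⟩

variable {lS lL lA lE : Filter (U ⊗[k] V)}

theorem map_sub_prod_eq_of_hasBasis (hL : lL.HasBasis (LambdaCond (k := k)) SetLike.coe)
    (hA : lA.HasBasis (ArrowCond (k := k)) SetLike.coe)
    (hE : lE.HasBasis (fun PQ : Submodule k U × Submodule k V =>
      IsOpen (PQ.1 : Set U) ∧ IsOpen (PQ.2 : Set V))
      fun PQ => (tensorImage PQ.1 ⊤ ⊔ tensorImage ⊤ PQ.2 : Submodule k (U ⊗[k] V))) :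
    map (fun e : (U ⊗[k] V) × (U ⊗[k] V) => e.1 - e.2) (lL ×ˢ lA) = lE := by
  refine le_antisymm (((hL.prod hA).tendsto_iff hE).2 fun PQ hPQ => ?_)
    ((hE.le_basis_iff ((hL.prod hA).map _)).2 fun E₁E₂ hE₁E₂ => ?_)
  · let W := tensorImage PQ.1 ⊤ ⊔ tensorImage ⊤ PQ.2
    refine ⟨((W, W) : Submodule k (U ⊗[k] V) × Submodule k (U ⊗[k] V)),
      ⟨lambdaCond_tensorImage_sup hPQ.1 hPQ.2, arrowCond_tensorImage_sup hPQ.1 hPQ.2⟩,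
      fun e he => W.sub_mem he.1 he.2⟩
  · obtain ⟨⟨⟨P, hP, hPE⟩, -⟩, ⟨⟨Q, hQ, hQE⟩, -⟩⟩ := hE₁E₂
    refine ⟨(P, Q), ⟨hP, hQ⟩, fun w hw => ?_⟩
    obtain ⟨a, ha, b, hb, rfl⟩ := Submodule.mem_sup.1 hw
    exact ⟨(a, -b), ⟨hPE ha, neg_mem (hQE hb)⟩, sub_neg_eq_add a b⟩

theorem eq_comap_diag_prod_of_hasBasis (hL : lL.HasBasis (LambdaCond (k := k)) SetLike.coe)
    (hA : lA.HasBasis (ArrowCond (k := k)) SetLike.coe)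
    (hS : lS.HasBasis (StarCond (k := k)) SetLike.coe) :
    lS = comap (fun w => (w, w)) (lL ×ˢ lA) := by
  refine le_antisymm ((hS.le_basis_iff ((hL.prod hA).comap _)).2 fun E₁E₂ h => ?_)
    ((((hL.prod hA).comap _).le_basis_iff hS).2 fun E hE => ?_)
  · exact ⟨E₁E₂.1 ⊓ E₁E₂.2, h.1.inf_arrowCond h.2, fun _ hw => hw⟩
  · obtain ⟨E₁, E₂, h₁, h₂, hle⟩ := hE.exists_lambdaCond_arrowCond
    exact ⟨(E₁, E₂), ⟨h₁, h₂⟩, fun _ hw => hle hw⟩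

end Conditions

theorem statement19_general {k : Type*} [Field k]
    {U V : Type*}
    [AddCommGroup U] [Module k U] [TopologicalSpace U]
    [AddCommGroup V] [Module k V] [TopologicalSpace V]
    (τs : TopologicalSpace (U ⊗[k] V)) (hτs : IsStarTopology τs)
    (τl : TopologicalSpace (U ⊗[k] V)) (hτl : IsLambdaTopology τl)
    (τa : TopologicalSpace (U ⊗[k] V)) (hτa : IsArrowTopology τa)
    (τe : TopologicalSpace (U ⊗[k] V)) (hτe : IsShriekTopology τe)
    (T : TopologicalSpace ((U ⊗[k] V) × (U ⊗[k] V)))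
    (hT : T = @instTopologicalSpaceProd (U ⊗[k] V) (U ⊗[k] V) τl τa)
    (d : (U ⊗[k] V) × (U ⊗[k] V) → U ⊗[k] V) (hd : d = fun e => e.1 - e.2)
    (δ : U ⊗[k] V → (U ⊗[k] V) × (U ⊗[k] V)) (hδ : δ = fun w => (w, w)) :
    (@Continuous _ _ T τe d ∧ Function.Surjective d ∧ @IsOpenMap _ _ T τe d) ∧
    (τs = @TopologicalSpace.induced (U ⊗[k] V) ((U ⊗[k] V) × (U ⊗[k] V)) δ T ∧
      Set.range δ = {e | d e = 0}) := by
  obtain ⟨gs, bs⟩ := hτs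
  obtain ⟨gl, bl⟩ := hτl
  obtain ⟨ga, ba⟩ := hτa
  obtain ⟨ge, be⟩ := hτe
  subst hT hd hδ
  let W := U ⊗[k] V
  let τT := @instTopologicalSpaceProd W W τl τa
  have gT := @Prod.instIsTopologicalAddGroup W W τl _ gl τa _ ga
  have hT0 : @nhds _ τT 0 = @nhds W τl 0 ×ˢ @nhds W τa 0 :=
    @nhds_prod_eq W W τl τa 0 0
  let D : W × W →+ W := AddMonoidHom.fst W W - AddMonoidHom.snd W W
  let Δ : W →+ W × W := (AddMonoidHom.id W).prod (AddMonoidHom.id W)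
  refine ⟨⟨?_, fun w => ⟨(w, 0), sub_zero w⟩, ?_⟩, ?_, ?_⟩
  · refine @continuous_of_tendsto_nhds_zero _ τT _ gT _ _ _ τe _ _ _ D ?_
    rw [hT0]
    exact (map_sub_prod_eq_of_hasBasis bl ba be).le
  · refine (@IsTopologicalAddGroup.isOpenMap_iff_nhds_zero _ τT _ gT _ _ τe _ _ _ _ D).2 ?_
    rw [hT0]
    exact (map_sub_prod_eq_of_hasBasis bl ba be).ge
  · refine IsTopologicalAddGroup.ext gs (@topologicalAddGroup_induced _ _ τT _ gT _ _ _ _ Δ) ?_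
    rw [@nhds_induced _ _ τT, @nhds_prod_eq W W τl τa]
    exact eq_comap_diag_prod_of_hasBasis bl ba bs
  · ext e
    simp [sub_eq_zero, Prod.ext_iff, eq_comm]

/-- Let `k` be a field with the discrete topology and `U`, `V` topological
`k`-vector spaces with linear topology.  Consider the difference map
`d : (U ⊗ V) × (U ⊗ V) → U ⊗ V`, `d (e₁, e₂) = e₁ - e₂`, and the diagonal map
`δ : U ⊗ V → (U ⊗ V) × (U ⊗ V)`, `δ w = (w, w)`.  Then:
(a) `d` is continuous, surjective and open from `(U ⊗^λ V) × (U ⊗^→ V)` (product topology) to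
    `U ⊗^! V`;
(b) the `*`-topology on `U ⊗ V` is the topology induced by `δ` from the product topology on
    `(U ⊗^λ V) × (U ⊗^→ V)` (so `δ` is a topological embedding), and the image of `δ` is
    exactly the kernel of `d`. -/
theorem statement19 {k : Type*} [Field k] [TopologicalSpace k] [DiscreteTopology k]
    {U V : Type*}
    [AddCommGroup U] [Module k U] [TopologicalSpace U] [IsTopologicalAddGroup U]
    [ContinuousSMul k U] (hU : HasLinearTopologyMod k U)
    [AddCommGroup V] [Module k V] [TopologicalSpace V] [IsTopologicalAddGroup V]
    [ContinuousSMul k V] (hV : HasLinearTopologyMod k V)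
    (τs : TopologicalSpace (U ⊗[k] V)) (hτs : IsStarTopology τs)
    (τl : TopologicalSpace (U ⊗[k] V)) (hτl : IsLambdaTopology τl)
    (τa : TopologicalSpace (U ⊗[k] V)) (hτa : IsArrowTopology τa)
    (τe : TopologicalSpace (U ⊗[k] V)) (hτe : IsShriekTopology τe)
    (T : TopologicalSpace ((U ⊗[k] V) × (U ⊗[k] V)))
    (hT : T = @instTopologicalSpaceProd (U ⊗[k] V) (U ⊗[k] V) τl τa)
    (d : (U ⊗[k] V) × (U ⊗[k] V) → U ⊗[k] V) (hd : d = fun e => e.1 - e.2)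
    (δ : U ⊗[k] V → (U ⊗[k] V) × (U ⊗[k] V)) (hδ : δ = fun w => (w, w)) :
    (@Continuous _ _ T τe d ∧ Function.Surjective d ∧ @IsOpenMap _ _ T τe d) ∧
    (τs = @TopologicalSpace.induced (U ⊗[k] V) ((U ⊗[k] V) × (U ⊗[k] V)) δ T ∧
      Set.range δ = {e | d e = 0}) :=
  statement19_general τs hτs τl hτl τa hτa τe hτe T hT d hd δ hδ
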